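/- Let P be a positive logic and L := Int + P, with corresponding varieties V_P (Brouwerian) and V_L (Heyting). For any set R of positive multiple-conclusion rules and any positive multiple-conclusion rule r: r semantically follows from R over V_P (every Brouwerian algebra in V_P validating all rules of R validates r) if and only if r semantically follows from R over V_L (every Heyting algebra in V_L validating all rules of R validates r). -/

import Mathlib

/-- Propositional formulas over ∧, ∨, →, ⊥ and variables. -/
inductive Fml : Type
  | var : ℕ → Fml
  | bot : Fml
  | and : Fml → Fml → Fml
  | or  : Fml → Fml → Fml
  | imp : Fml → Fml → Fml

namespace Fml

/-- A formula is positive if it contains no ⊥. -/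
def Positive : Fml → Prop
  | var _ => True
  | bot => False
  | and A B => A.Positive ∧ B.Positive
  | or A B => A.Positive ∧ B.Positive
  | imp A B => A.Positive ∧ B.Positive

/-- Evaluation in a Brouwerian (generalized Heyting) algebra, with a designated
value `z` interpreting ⊥. -/
def evalB {α : Type} [GeneralizedHeytingAlgebra α] (z : α) (ν : ℕ → α) : Fml → α
  | var n => ν n
  | bot => z
  | and A B => A.evalB z ν ⊓ B.evalB z ν
  | or A B => A.evalB z ν ⊔ B.evalB z ν
  | imp A B => A.evalB z ν ⇨ B.evalB z ν

/-- Evaluation in a Heyting algebra (⊥ interpreted as the least element). -/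
def eval {α : Type} [HeytingAlgebra α] (ν : ℕ → α) (A : Fml) : α := A.evalB ⊥ ν

/-- Evaluation of (positive) formulas in a Brouwerian algebra
(⊥ gets the junk value ⊤; it is irrelevant for positive formulas). -/
def pEval {α : Type} [GeneralizedHeytingAlgebra α] (ν : ℕ → α) (A : Fml) : α := A.evalB ⊤ ν

/-- Substitution. -/
def subst (σ : ℕ → Fml) : Fml → Fml
  | var n => σ n
  | bot => bot
  | and A B => and (A.subst σ) (B.subst σ)
  | or A B => or (A.subst σ) (B.subst σ)
  | imp A B => imp (A.subst σ) (B.subst σ)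

/-- Replacing every occurrence of ⊥ by the formula `C`. -/
def substBot : Fml → Fml → Fml
  | var n, _ => var n
  | bot, C => C
  | and A B, C => and (A.substBot C) (B.substBot C)
  | or A B, C => or (A.substBot C) (B.substBot C)
  | imp A B, C => imp (A.substBot C) (B.substBot C)

/-- The set of variables occurring in a formula. -/
def vars : Fml → Finset ℕ
  | var n => {n}
  | bot => ∅
  | and A B => A.vars ∪ B.vars
  | or A B => A.vars ∪ B.vars
  | imp A B => A.vars ∪ B.vars

end Fml

/-- The set of positive formulas. -/
def PosFml : Set Fml := {A | A.Positive}

/-- A substitution is positive if all its values are positive formulas. -/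
def PosSubst (σ : ℕ → Fml) : Prop := ∀ n, (σ n).Positive

/-- Validity of a formula in a Heyting algebra. -/
def ValidH (α : Type) [HeytingAlgebra α] (A : Fml) : Prop := ∀ ν : ℕ → α, A.eval ν = ⊤

/-- Intuitionistic propositional logic (via algebraic semantics). -/
def IntL : Set Fml := {A | ∀ (α : Type) [HeytingAlgebra α], ValidH α A}

/-- Superintuitionistic logics. -/
structure IsSILogic (L : Set Fml) : Prop where
  int_sub : IntL ⊆ L
  mp : ∀ A B : Fml, Fml.imp A B ∈ L → A ∈ L → B ∈ L
  subst_closed : ∀ A ∈ L, ∀ σ : ℕ → Fml, A.subst σ ∈ L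

/-- The least superintuitionistic logic containing `Γ`. -/
def IntPlus (Γ : Set Fml) : Set Fml := ⋂₀ {L | IsSILogic L ∧ Γ ⊆ L}

/-- The positive fragment of intuitionistic logic. -/
def IntLPos : Set Fml := IntL ∩ PosFml

/-- Positive logics. -/
structure IsPosLogic (P : Set Fml) : Prop where
  pos : P ⊆ PosFml
  int_sub : IntLPos ⊆ P
  mp : ∀ A B : Fml, Fml.imp A B ∈ P → A ∈ P → B ∈ P
  subst_closed : ∀ A ∈ P, ∀ σ : ℕ → Fml, PosSubst σ → A.subst σ ∈ P

/-- The least positive logic containing `Γ`. -/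
def IntPosPlus (Γ : Set Fml) : Set Fml := ⋂₀ {P | IsPosLogic P ∧ Γ ⊆ P}

/-- Homomorphism of Brouwerian algebras (preserves ⊓, ⊔, ⇨, ⊤). -/
def IsBrHom {α β : Type} [GeneralizedHeytingAlgebra α] [GeneralizedHeytingAlgebra β]
    (f : α → β) : Prop :=
  (∀ a b : α, f (a ⊓ b) = f a ⊓ f b) ∧ (∀ a b : α, f (a ⊔ b) = f a ⊔ f b) ∧
  (∀ a b : α, f (a ⇨ b) = f a ⇨ f b) ∧ f ⊤ = ⊤

/-- A Heyting algebra is a model of a set of formulas `T`. -/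
def Models (α : Type) [HeytingAlgebra α] (T : Set Fml) : Prop := ∀ A ∈ T, ValidH α A

/-- The variety (of Heyting algebras) axiomatized by `T` is B-saturated: any Heyting
algebra whose Brouwerian reduct embeds into the reduct of a model of `T` is itself
a model of `T`. -/
def BSaturated (T : Set Fml) : Prop :=
  ∀ (α : Type) (iα : HeytingAlgebra α),
    (∃ (β : Type) (iβ : HeytingAlgebra β), @Models β iβ T ∧
      ∃ f : α → β, Function.Injective f ∧
        @IsBrHom α β iα.toGeneralizedHeytingAlgebra iβ.toGeneralizedHeytingAlgebra f) →
    @Models α iα T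

/-- A subset of a Brouwerian algebra closed under the Brouwerian operations. -/
def BrClosed {α : Type} [GeneralizedHeytingAlgebra α] (S : Set α) : Prop :=
  ⊤ ∈ S ∧ ∀ a ∈ S, ∀ b ∈ S, a ⊓ b ∈ S ∧ a ⊔ b ∈ S ∧ (a ⇨ b) ∈ S

/-- The Brouwerian subalgebra generated by a set. -/
def genBr {α : Type} [GeneralizedHeytingAlgebra α] (s : Set α) : Set α :=
  ⋂₀ {S | BrClosed S ∧ s ⊆ S}

/-- Conjunction of a list of variables (nonempty case is the intended one). -/
def conjList : List ℕ → Fml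
  | [] => Fml.imp (Fml.var 0) (Fml.var 0)
  | [n] => Fml.var n
  | n :: l => Fml.and (Fml.var n) (conjList l)

/-- The conjunction π^∧ of all variables in a finite set π. -/
def conjOf (π : Finset ℕ) : Fml := conjList (π.sort (· ≤ ·))

/-- Multiple-conclusion rules. -/
def MRule : Type := Finset Fml × Finset Fml

/-- A rule is positive if all its premises and conclusions are positive. -/
def PosRule (r : MRule) : Prop := (∀ A ∈ r.1, A.Positive) ∧ (∀ B ∈ r.2, B.Positive)

/-- Validity of a (positive) m-rule in a Brouwerian algebra. -/
def RuleValid (α : Type) [GeneralizedHeytingAlgebra α] (r : MRule) : Prop :=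
  ∀ ν : ℕ → α, (∀ A ∈ r.1, A.pEval ν = ⊤) → ∃ B ∈ r.2, B.pEval ν = ⊤

/-- A Brouwerian algebra is a model of a set of positive formulas. -/
def ModelsP (β : Type) [GeneralizedHeytingAlgebra β] (P : Set Fml) : Prop :=
  ∀ A ∈ P, ∀ ν : ℕ → β, A.pEval ν = ⊤

/-- Filter of a Brouwerian (or Heyting) algebra. -/
def IsFilter' {α : Type} [GeneralizedHeytingAlgebra α] (F : Set α) : Prop :=
  ⊤ ∈ F ∧ ∀ a b : α, a ∈ F → (a ⇨ b) ∈ F → b ∈ F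


/-!
A Heyting algebra in `V_L` is, as a Brouwerian algebra, in `V_P`, which gives one direction.
Conversely, if a valuation `ν` into some `β ∈ V_P` refutes `r` while `β` validates `R`, then so
does the Brouwerian subalgebra generated by the finitely many values of `ν` on the variables of `r`.
That subalgebra has a least element (the meet of its generators), hence is a Heyting algebra;
it validates `P`, so it lies in `V_L`, and being a subalgebra of `β` it still validates `R`.
-/

namespace Fml

variable {α : Type} [GeneralizedHeytingAlgebra α]

lemma evalB_eq_of_positive {A : Fml} (hA : A.Positive) (z z' : α) (ν : ℕ → α) :
    A.evalB z ν = A.evalB z' ν := by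
  induction A with
  | var n => rfl
  | bot => exact hA.elim
  | and A B ihA ihB => simp only [evalB, ihA hA.1, ihB hA.2]
  | or A B ihA ihB => simp only [evalB, ihA hA.1, ihB hA.2]
  | imp A B ihA ihB => simp only [evalB, ihA hA.1, ihB hA.2]

lemma eval_eq_pEval {β : Type} [HeytingAlgebra β] {A : Fml} (hA : A.Positive) (ν : ℕ → β) :
    A.eval ν = A.pEval ν :=
  evalB_eq_of_positive hA ⊥ ⊤ ν

lemma evalB_congr (z : α) {ν ν' : ℕ → α} {A : Fml} (h : ∀ n ∈ A.vars, ν n = ν' n) :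
    A.evalB z ν = A.evalB z ν' := by
  induction A with
  | var n => exact h n (Finset.mem_singleton_self n)
  | bot => rfl
  | and A B ihA ihB | or A B ihA ihB | imp A B ihA ihB =>
      simp only [evalB,
        ihA fun n hn => h n (Finset.mem_union_left _ hn),
        ihB fun n hn => h n (Finset.mem_union_right _ hn)]

lemma pEval_congr {ν ν' : ℕ → α} {A : Fml} (h : ∀ n ∈ A.vars, ν n = ν' n) :
    A.pEval ν = A.pEval ν' :=
  evalB_congr ⊤ h

lemma evalB_subst (z : α) (σ : ℕ → Fml) (ν : ℕ → α) (A : Fml) :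
    (A.subst σ).evalB z ν = A.evalB z (fun n => (σ n).evalB z ν) := by
  induction A with
  | var n => rfl
  | bot => rfl
  | and A B ihA ihB => simp only [subst, evalB, ihA, ihB]
  | or A B ihA ihB => simp only [subst, evalB, ihA, ihB]
  | imp A B ihA ihB => simp only [subst, evalB, ihA, ihB]

end Fml

def MRule.vars (r : MRule) : Finset ℕ := r.1.sup Fml.vars ∪ r.2.sup Fml.vars

lemma MRule.vars_subset_of_mem_left {r : MRule} {A : Fml} (hA : A ∈ r.1) : A.vars ⊆ r.vars :=
  (Finset.le_sup (f := Fml.vars) hA).trans Finset.subset_union_left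

lemma MRule.vars_subset_of_mem_right {r : MRule} {B : Fml} (hB : B ∈ r.2) : B.vars ⊆ r.vars :=
  (Finset.le_sup (f := Fml.vars) hB).trans Finset.subset_union_right

section BrHom

variable {α β : Type} [GeneralizedHeytingAlgebra α] [GeneralizedHeytingAlgebra β] {f : α → β}

lemma IsBrHom.map_evalB (hf : IsBrHom f) (z : α) (μ : ℕ → α) (A : Fml) :
    f (A.evalB z μ) = A.evalB (f z) (f ∘ μ) := by
  obtain ⟨hinf, hsup, himp, -⟩ := hf
  induction A with
  | var n => rfl
  | bot => rfl
  | and A B ihA ihB => simp only [Fml.evalB, hinf, ihA, ihB]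
  | or A B ihA ihB => simp only [Fml.evalB, hsup, ihA, ihB]
  | imp A B ihA ihB => simp only [Fml.evalB, himp, ihA, ihB]

lemma IsBrHom.map_pEval (hf : IsBrHom f) (μ : ℕ → α) (A : Fml) :
    f (A.pEval μ) = A.pEval (f ∘ μ) := by
  rw [Fml.pEval, hf.map_evalB, hf.2.2.2, Fml.pEval]

lemma IsBrHom.pEval_comp_eq_top_iff (hf : IsBrHom f) (hinj : Function.Injective f)
    (μ : ℕ → α) (A : Fml) : A.pEval (f ∘ μ) = ⊤ ↔ A.pEval μ = ⊤ := by
  rw [← hf.map_pEval, ← hf.2.2.2, hinj.eq_iff]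

lemma RuleValid.exists_of_isBrHom {r : MRule} (hr : RuleValid α r) (hf : IsBrHom f)
    (hinj : Function.Injective f) (μ : ℕ → α) {ν : ℕ → β} (hν : ∀ n ∈ r.vars, f (μ n) = ν n)
    (hprem : ∀ A ∈ r.1, A.pEval ν = ⊤) : ∃ B ∈ r.2, B.pEval ν = ⊤ := by
  have hagree {A : Fml} (hA : A.vars ⊆ r.vars) : A.pEval ν = A.pEval (f ∘ μ) :=
    Fml.pEval_congr fun n hn => (hν n (hA hn)).symm
  obtain ⟨B, hB, hBμ⟩ := hr μ fun A hA => by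
    rw [← hf.pEval_comp_eq_top_iff hinj, ← hagree (MRule.vars_subset_of_mem_left hA)]
    exact hprem A hA
  refine ⟨B, hB, ?_⟩
  rw [hagree (MRule.vars_subset_of_mem_right hB), hf.pEval_comp_eq_top_iff hinj]
  exact hBμ

lemma IsBrHom.ruleValid_of_injective {r : MRule} (hf : IsBrHom f)
    (hinj : Function.Injective f) (hβ : RuleValid β r) : RuleValid α r := fun μ hprem =>
  let ⟨B, hB, hBμ⟩ := hβ (f ∘ μ) fun A hA => (hf.pEval_comp_eq_top_iff hinj μ A).2 (hprem A hA)
  ⟨B, hB, (hf.pEval_comp_eq_top_iff hinj μ B).1 hBμ⟩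

lemma IsBrHom.modelsP_of_injective {P : Set Fml} (hf : IsBrHom f)
    (hinj : Function.Injective f) (hβ : ModelsP β P) : ModelsP α P := fun A hA μ =>
  (hf.pEval_comp_eq_top_iff hinj μ A).1 (hβ A hA (f ∘ μ))

end BrHom

section Logics

lemma subset_intPlus (Γ : Set Fml) : Γ ⊆ IntPlus Γ := fun _ hA _ hL => hL.2 hA

lemma intPlus_subset {Γ L : Set Fml} (hL : IsSILogic L) (hΓ : Γ ⊆ L) : IntPlus Γ ⊆ L :=
  Set.sInter_subset_of_mem ⟨hL, hΓ⟩

lemma isSILogic_validH (α : Type) [HeytingAlgebra α] : IsSILogic {A | ValidH α A} where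
  int_sub _ hA := hA α
  mp A B hAB hA ν := by
    have h := hAB ν
    rwa [Fml.eval, Fml.evalB, ← Fml.eval, hA ν, top_himp] at h
  subst_closed A hA σ ν := by
    rw [Fml.eval, Fml.evalB_subst]
    exact hA _

lemma models_intPlus_iff_modelsP {P : Set Fml} (hP : P ⊆ PosFml) (α : Type) [HeytingAlgebra α] :
    Models α (IntPlus P) ↔ ModelsP α P := by
  constructor
  · intro h A hA ν
    rw [← Fml.eval_eq_pEval (hP hA)]
    exact h A (subset_intPlus P hA) ν
  · intro h A hA
    refine intPlus_subset (isSILogic_validH α) (fun B hB ν => ?_) hA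
    rw [Fml.eval_eq_pEval (hP hB)]
    exact h B hB ν

end Logics

section Subalgebra

variable {β : Type} [GeneralizedHeytingAlgebra β]

lemma subset_genBr (s : Set β) : s ⊆ genBr s := fun _ hx _ hS => hS.2 hx

lemma genBr_subset {s S : Set β} (hS : BrClosed S) (hs : s ⊆ S) : genBr s ⊆ S :=
  Set.sInter_subset_of_mem ⟨hS, hs⟩

lemma brClosed_genBr (s : Set β) : BrClosed (genBr s) :=
  ⟨fun _ hS => hS.1.1, fun a ha b hb =>
    ⟨fun S hS => (hS.1.2 a (ha S hS) b (hb S hS)).1,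
     fun S hS => (hS.1.2 a (ha S hS) b (hb S hS)).2.1,
     fun S hS => (hS.1.2 a (ha S hS) b (hb S hS)).2.2⟩⟩

lemma brClosed_Ici (a : β) : BrClosed (Set.Ici a) :=
  ⟨le_top, fun _ hx _ hy => ⟨le_inf hx hy, le_sup_of_le_left hx, hy.trans le_himp⟩⟩

abbrev BrSubalg (s : Set β) : Type := {x : β // x ∈ genBr s}

namespace BrSubalg

variable {s : Set β}

instance : Min (BrSubalg s) :=
  ⟨fun a b => ⟨a.1 ⊓ b.1, ((brClosed_genBr s).2 _ a.2 _ b.2).1⟩⟩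

instance : Max (BrSubalg s) :=
  ⟨fun a b => ⟨a.1 ⊔ b.1, ((brClosed_genBr s).2 _ a.2 _ b.2).2.1⟩⟩

instance : HImp (BrSubalg s) :=
  ⟨fun a b => ⟨a.1 ⇨ b.1, ((brClosed_genBr s).2 _ a.2 _ b.2).2.2⟩⟩

instance : Top (BrSubalg s) := ⟨⟨⊤, (brClosed_genBr s).1⟩⟩

instance : GeneralizedHeytingAlgebra (BrSubalg s) :=
  Subtype.val_injective.generalizedHeytingAlgebra Subtype.val
    Iff.rfl Iff.rfl (fun _ _ => rfl) (fun _ _ => rfl) rfl (fun _ _ => rfl)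

lemma isBrHom_val : IsBrHom (Subtype.val : BrSubalg s → β) :=
  ⟨fun _ _ => rfl, fun _ _ => rfl, fun _ _ => rfl, rfl⟩

instance (t : Finset β) : OrderBot (BrSubalg (t : Set β)) where
  bot := ⟨t.inf id, Finset.inf_mem _ (brClosed_genBr _).1
    (fun _ hx _ hy => ((brClosed_genBr _).2 _ hx _ hy).1) t id
    (fun _ hx => subset_genBr _ (Finset.mem_coe.2 hx))⟩
  bot_le x := genBr_subset (brClosed_Ici (t.inf id)) (fun _ hy => Finset.inf_le hy) x.2

instance (t : Finset β) : HeytingAlgebra (BrSubalg (t : Set β)) where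
  compl a := a ⇨ ⊥
  himp_bot _ := rfl

lemma exists_lift [DecidableEq β] (ν : ℕ → β) (V : Finset ℕ) :
    ∃ μ : ℕ → BrSubalg (↑(V.image ν) : Set β), ∀ n ∈ V, (μ n).1 = ν n :=
  ⟨fun n => if hn : n ∈ V then
    ⟨ν n, subset_genBr _ (Finset.mem_coe.2 (Finset.mem_image_of_mem ν hn))⟩ else ⊤,
   fun n hn => by simp only [dif_pos hn]⟩

end BrSubalg

end Subalgebra

theorem stmt14_general (P : Set Fml) (hP : IsPosLogic P) (R : Set MRule) (r : MRule) :
    (∀ (β : Type) [GeneralizedHeytingAlgebra β], ModelsP β P →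
        (∀ s ∈ R, RuleValid β s) → RuleValid β r) ↔
    (∀ (α : Type) [HeytingAlgebra α], Models α (IntPlus P) →
        (∀ s ∈ R, RuleValid α s) → RuleValid α r) := by
  constructor
  · intro h α _ hαL hαR
    exact h α ((models_intPlus_iff_modelsP hP.pos α).1 hαL) hαR
  · intro h β _ hβP hβR ν hprem
    classical
    obtain ⟨μ, hμ⟩ := BrSubalg.exists_lift ν r.vars
    refine (h _ ?_ fun s hs => ?_).exists_of_isBrHom BrSubalg.isBrHom_val
      Subtype.val_injective μ hμ hprem
    · exact (models_intPlus_iff_modelsP hP.pos _).2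
        (BrSubalg.isBrHom_val.modelsP_of_injective Subtype.val_injective hβP)
    · exact BrSubalg.isBrHom_val.ruleValid_of_injective Subtype.val_injective (hβR s hs)

/-- for positive m-rules, semantic consequence over the variety of
Brouwerian algebras of P coincides with semantic consequence over the variety of
Heyting algebras of L = Int + P. -/
theorem stmt14 (P : Set Fml) (hP : IsPosLogic P) (R : Set MRule)
    (hR : ∀ r ∈ R, PosRule r) (r : MRule) (hr : PosRule r) :
    (∀ (β : Type) [GeneralizedHeytingAlgebra β], ModelsP β P →
        (∀ s ∈ R, RuleValid β s) → RuleValid β r) ↔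
    (∀ (α : Type) [HeytingAlgebra α], Models α (IntPlus P) →
        (∀ s ∈ R, RuleValid α s) → RuleValid α r) :=
  stmt14_general P hP R r
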